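/- arXiv:2205.00543 — 6 statements merged into one kernel-verified Lean document; each statement's English description precedes it below -/
import Mathlib

section
/- (Finsler's lemma / homogeneous S-lemma with equality constraint.) Let E be a finite-dimensional real inner product space and let A, B be self-adjoint linear endomorphisms of E. Assume B is indefinite, i.e., there exist u, v ∈ E with ⟨B u, u⟩ > 0 and ⟨B v, v⟩ < 0. Then ⟨A x, x⟩ ≥ 0 for every x ∈ E with ⟨B x, x⟩ = 0 if and only if there exists τ ∈ ℝ such that A + τ·B is positive semidefinite. -/
open scoped RealInnerProductSpace

/-!
Write `Q x = ⟪A x, x⟫` and `P x = ⟪B x, x⟫`. The whole argument happens in planes: for `P x > 0`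
and `P y < 0`, the quadratic `r ↦ P (r • x + y)` has a positive root `r`, and `r ↦ P (r • x - y)`
a positive root `s`. Vieta's relation gives `r s P x + P y = 0`, and adding `s Q (r • x + y)`
and `r Q (s • x - y)` cancels the cross terms, leaving `(r + s) (r s Q x + Q y) ≥ 0`. Hence
`Q y / P y ≤ Q x / P x`, so the quotients `Q / P` on the positive cone of `P` are bounded below
by those on its negative cone, and `τ = -inf {Q x / P x | P x > 0}` works.
-/

theorem exists_pos_quadratic_eq_zero {a c : ℝ} (ha : 0 < a) (hc : c < 0) (b : ℝ) :
    ∃ r, 0 < r ∧ a * (r * r) + b * r + c = 0 := by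
  set d := √(discrim a b c)
  have hd : d * d = discrim a b c := Real.mul_self_sqrt (by unfold discrim; nlinarith)
  have hbd : b < d := by
    calc b ≤ |b| := le_abs_self b
      _ = √(b ^ 2) := (Real.sqrt_sq_eq_abs b).symm
      _ < d := Real.sqrt_lt_sqrt (sq_nonneg b) (by unfold discrim; nlinarith)
  refine ⟨(-b + d) / (2 * a), div_pos (by linarith) (by linarith), ?_⟩
  rw [discrim] at hd
  field_simp
  linear_combination hd

namespace QuadraticMap

theorem map_smul_add {R M : Type*} [CommRing R] [AddCommGroup M] [Module R M]
    (Q : QuadraticForm R M) (r : R) (x y : M) :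
    Q (r • x + y) = r * r * Q x + r * polar Q x y + Q y := by
  rw [QuadraticMap.map_add Q, QuadraticMap.map_smul, polar_smul_left, smul_eq_mul, smul_eq_mul,
    add_right_comm]

variable {E : Type*} [AddCommGroup E] [Module ℝ E] {Q P : QuadraticForm ℝ E}

theorem div_le_div_of_nonneg_of_isotropic (h : ∀ z, P z = 0 → 0 ≤ Q z) {x y : E}
    (hx : 0 < P x) (hy : P y < 0) : Q y / P y ≤ Q x / P x := by
  obtain ⟨r, hr, hPr⟩ := exists_pos_quadratic_eq_zero hx hy (polar P x y)
  obtain ⟨s, hs, hPs⟩ := exists_pos_quadratic_eq_zero hx hy (-polar P x y)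
  have hQr : 0 ≤ r * r * Q x + r * polar Q x y + Q y := by
    rw [← map_smul_add]
    exact h _ (by rw [map_smul_add]; linarith)
  have hQs : 0 ≤ s * s * Q x + s * -polar Q x y + Q y := by
    have hsub (F : QuadraticForm ℝ E) : F (s • x + -y) = s * s * F x + s * -polar F x y + F y := by
      rw [map_smul_add, polar_neg_right, QuadraticMap.map_neg]
    rw [← hsub]
    exact h _ (by rw [hsub]; linarith)
  have hvieta : r * s * P x + P y = 0 := by
    have : (r + s) * (r * s * P x + P y) = 0 := by linear_combination s * hPr + r * hPs
    exact (mul_eq_zero.1 this).resolve_left (by positivity)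
  have hQrs : 0 ≤ r * s * Q x + Q y := by
    have : 0 ≤ (r + s) * (r * s * Q x + Q y) := by
      nlinarith [mul_nonneg hs.le hQr, mul_nonneg hr.le hQs]
    exact nonneg_of_mul_nonneg_right this (by positivity)
  have hxy : Q x / P x * P y = -(r * s * Q x) := by
    rw [← neg_eq_of_add_eq_zero_right hvieta]
    field_simp
  rw [div_le_iff_of_neg hy, hxy]
  linarith

theorem exists_nonneg_add_smul_of_nonneg_of_isotropic (hpos : ∃ u, 0 < P u)
    (hneg : ∃ v, P v < 0) (h : ∀ z, P z = 0 → 0 ≤ Q z) : ∃ τ : ℝ, ∀ x, 0 ≤ (Q + τ • P) x := by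
  obtain ⟨u, hu⟩ := hpos
  obtain ⟨v, hv⟩ := hneg
  set S := (fun x ↦ Q x / P x) '' {x | 0 < P x}
  have hS : S.Nonempty := ⟨_, u, hu, rfl⟩
  have hSbdd : BddBelow S := by
    refine ⟨Q v / P v, ?_⟩
    rintro _ ⟨x, hx, rfl⟩
    exact div_le_div_of_nonneg_of_isotropic h hx hv
  refine ⟨-sInf S, fun x ↦ ?_⟩
  suffices sInf S * P x ≤ Q x by
    simp only [add_apply, smul_apply, smul_eq_mul]
    linarith
  rcases lt_trichotomy (P x) 0 with hx | hx | hx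
  · refine (div_le_iff_of_neg hx).1 (le_csInf hS ?_)
    rintro _ ⟨w, hw, rfl⟩
    exact div_le_div_of_nonneg_of_isotropic h hw hx
  · simpa [hx] using h x hx
  · exact (le_div_iff₀ hx).1 (csInf_le hSbdd ⟨x, hx, rfl⟩)

end QuadraticMap

theorem finsler_lemma_general
    {E : Type*} [NormedAddCommGroup E] [InnerProductSpace ℝ E]
    (A B : E →ₗ[ℝ] E)
    (hBpos : ∃ u : E, 0 < ⟪B u, u⟫) (hBneg : ∃ v : E, ⟪B v, v⟫ < 0) :
    (∀ x : E, ⟪B x, x⟫ = 0 → 0 ≤ ⟪A x, x⟫) ↔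
      ∃ τ : ℝ, ∀ x : E, 0 ≤ ⟪(A + τ • B) x, x⟫ := by
  let form (T : E →ₗ[ℝ] E) : QuadraticForm ℝ E := LinearMap.BilinMap.toQuadraticMap (innerₗ E ∘ₗ T)
  have hform (T : E →ₗ[ℝ] E) (x : E) : form T x = ⟪T x, x⟫ := rfl
  constructor
  · intro h
    obtain ⟨τ, hτ⟩ := QuadraticMap.exists_nonneg_add_smul_of_nonneg_of_isotropic
      (Q := form A) (P := form B)
      hBpos hBneg h
    refine ⟨τ, fun x ↦ ?_⟩
    simpa [hform, inner_add_left, real_inner_smul_left] using hτ x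
  · rintro ⟨τ, hτ⟩ x hx
    simpa [inner_add_left, real_inner_smul_left, hx] using hτ x

/-- **Finsler's lemma** (homogeneous S-lemma with equality constraint).
Let `A`, `B` be self-adjoint endomorphisms of a finite-dimensional real inner product
space `E`, with `B` indefinite.  Then `⟪A x, x⟫ ≥ 0` for every `x` with `⟪B x, x⟫ = 0`
if and only if `A + τ • B` is positive semidefinite for some `τ ∈ ℝ`. -/
theorem finsler_lemma
    {E : Type*} [NormedAddCommGroup E] [InnerProductSpace ℝ E] [FiniteDimensional ℝ E]
    (A B : E →ₗ[ℝ] E) (hA : A.IsSymmetric) (hB : B.IsSymmetric)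
    (hBpos : ∃ u : E, 0 < ⟪B u, u⟫) (hBneg : ∃ v : E, ⟪B v, v⟫ < 0) :
    (∀ x : E, ⟪B x, x⟫ = 0 → 0 ≤ ⟪A x, x⟫) ↔
      ∃ τ : ℝ, ∀ x : E, 0 ≤ ⟪(A + τ • B) x, x⟫ :=
  finsler_lemma_general A B hBpos hBneg
end

section
/- (Strict Finsler's lemma.) Let E be a finite-dimensional real inner product space and let A, B be self-adjoint linear endomorphisms of E. Assume B is indefinite, i.e., there exist u, v ∈ E with ⟨B u, u⟩ > 0 and ⟨B v, v⟩ < 0. Then ⟨A x, x⟩ > 0 for every x ≠ 0 with ⟨B x, x⟩ = 0 if and only if there exists τ ∈ ℝ such that A + τ·B is positive definite. -/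
open scoped RealInnerProductSpace

/-!
Let `m(τ)` be the minimum of `⟪(A + τ • B) x, x⟫` over the unit sphere, i.e. the smallest
eigenvalue of `A + τ • B`. As an infimum of affine functions of `τ` it is concave, hence
continuous, and it tends to `-∞` as `τ → ±∞` because `B` is indefinite; so it attains a maximum
at some `τ₀`. Suppose `m(τ₀) ≤ 0`. The minimisers of `A + τ₀ • B` on the sphere are eigenvectors
for `m(τ₀)`. If `⟪B x, x⟫` had the same strict sign at all of them, moving `τ` slightly in that
direction would raise `m`; so it takes both signs on the eigenspace, which therefore contains a
nonzero `z` with `⟪B z, z⟫ = 0`, and then `⟪A z, z⟫ = m(τ₀) ‖z‖² ≤ 0`.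
-/

open Metric Filter Set Module.End

namespace LinearMap

variable {E : Type*} [NormedAddCommGroup E] [InnerProductSpace ℝ E]

-- The smallest eigenvalue of `T` when `T` is symmetric; `0` when `E` is trivial.
noncomputable def minRayleigh (T : E →ₗ[ℝ] E) : ℝ :=
  ⨅ x : sphere (0 : E) 1, ⟪T x, x⟫

lemma exists_mem_ne_zero_inner_map_self_eq_zero (B : E →ₗ[ℝ] E) (V : Submodule ℝ E) {x y : E}
    (hxV : x ∈ V) (hyV : y ∈ V) (hx : 0 < ⟪B x, x⟫) (hy : ⟪B y, y⟫ < 0) :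
    ∃ z ∈ V, z ≠ 0 ∧ ⟪B z, z⟫ = 0 := by
  have hφ : Continuous fun t : ℝ => ⟪B (y + t • (x - y)), y + t • (x - y)⟫ := by
    simp only [map_add, map_smul]
    fun_prop
  obtain ⟨t, -, ht⟩ := intermediate_value_Icc zero_le_one hφ.continuousOn
    (by simpa using ⟨hy.le, hx.le⟩)
  refine ⟨y + t • (x - y), V.add_mem hyV (V.smul_mem t (V.sub_mem hxV hyV)), fun h0 => ?_, ht⟩
  -- a vanishing combination would make `y` a multiple of `x`, but `B` has opposite signs on them
  have hyx : (1 - t) • y = (-t) • x := by linear_combination (norm := module) h0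
  have := congrArg (fun w => ⟪B w, w⟫) hyx
  simp only [map_smul, real_inner_smul_left, real_inner_smul_right] at this
  rcases eq_or_ne t 0 with rfl | ht0
  · simp only [sub_zero, one_mul, neg_zero, zero_mul] at this
    linarith
  · nlinarith [mul_pos (sq_pos_of_ne_zero ht0) hx, sq_nonneg (1 - t)]

variable [FiniteDimensional ℝ E]

lemma minRayleigh_le (T : E →ₗ[ℝ] E) {x : E} (hx : x ∈ sphere (0 : E) 1) :
    minRayleigh T ≤ ⟪T x, x⟫ :=
  ciInf_le (isCompact_range
    (by fun_prop : Continuous fun x : sphere (0 : E) 1 => ⟪T x, x⟫)).bddBelow ⟨x, hx⟩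

lemma minRayleigh_mul_norm_sq_le (T : E →ₗ[ℝ] E) (x : E) : minRayleigh T * ‖x‖ ^ 2 ≤ ⟪T x, x⟫ := by
  rcases eq_or_ne x 0 with rfl | hx
  · simp
  have h := minRayleigh_le T (x := ‖x‖⁻¹ • x)
    (mem_sphere_zero_iff_norm.2 (norm_smul_inv_norm (𝕜 := ℝ) hx))
  rw [map_smul, real_inner_smul_left, real_inner_smul_right] at h
  have hx' : 0 < ‖x‖ := norm_pos_iff.2 hx
  calc minRayleigh T * ‖x‖ ^ 2 ≤ ‖x‖⁻¹ * (‖x‖⁻¹ * ⟪T x, x⟫) * ‖x‖ ^ 2 := by gcongr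
    _ = ⟪T x, x⟫ := by field_simp

lemma tendsto_minRayleigh_add_smul_atBot (A B : E →ₗ[ℝ] E) {u : E} (hu : 0 < ⟪B u, u⟫) :
    Tendsto (fun τ : ℝ => minRayleigh (A + τ • B)) atBot atBot := by
  have hu0 : 0 < ‖u‖ ^ 2 := by
    refine pow_pos (norm_pos_iff.2 ?_) 2
    rintro rfl
    simp at hu
  refine tendsto_atBot_mono (fun τ => (le_div_iff₀ hu0).2 (minRayleigh_mul_norm_sq_le _ u))
    (Tendsto.atBot_div_const hu0 ?_)
  simp only [add_apply, smul_apply, inner_add_left, real_inner_smul_left]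
  exact tendsto_atBot_add_const_left _ _ (tendsto_id.atBot_mul_const hu)

lemma IsSymmetric.apply_eq_minRayleigh_smul {T : E →ₗ[ℝ] E} (hT : T.IsSymmetric) {x : E}
    (hx : x ∈ sphere (0 : E) 1) (hmin : ⟪T x, x⟫ = minRayleigh T) : T x = minRayleigh T • x := by
  set T' := T.toContinuousLinearMap
  have hT' : IsSelfAdjoint T' := ContinuousLinearMap.isSelfAdjoint_iff_isSymmetric.2 hT
  have hextr : IsLocalExtrOn T'.reApplyInnerSelf (sphere (0 : E) ‖x‖) x := by
    refine Or.inl (IsMinOn.localize fun y hy => ?_)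
    rw [mem_sphere_zero_iff_norm.1 hx] at hy
    simpa [T', ContinuousLinearMap.reApplyInnerSelf_apply, hmin] using minRayleigh_le T hy
  simpa [T', ContinuousLinearMap.rayleighQuotient, ContinuousLinearMap.reApplyInnerSelf_apply,
      mem_sphere_zero_iff_norm.1 hx, hmin]
    using hT'.eq_smul_self_of_isLocalExtrOn_real hextr

variable [Nontrivial E]

lemma exists_inner_map_self_eq_minRayleigh (T : E →ₗ[ℝ] E) :
    ∃ x ∈ sphere (0 : E) 1, ⟪T x, x⟫ = minRayleigh T := by
  have : Nonempty (sphere (0 : E) 1) := (NormedSpace.sphere_nonempty.2 zero_le_one).to_subtype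
  obtain ⟨x, hx⟩ := (isCompact_range
    (by fun_prop : Continuous fun x : sphere (0 : E) 1 => ⟪T x, x⟫)).sInf_mem (range_nonempty _)
  exact ⟨x, x.2, hx⟩

lemma concaveOn_minRayleigh_add_smul (A B : E →ₗ[ℝ] E) :
    ConcaveOn ℝ univ fun τ : ℝ => minRayleigh (A + τ • B) := by
  refine ⟨convex_univ, fun σ _ τ _ a b ha hb hab => ?_⟩
  obtain ⟨x, hx, hxmin⟩ := exists_inner_map_self_eq_minRayleigh (A + (a • σ + b • τ) • B)
  have hσ := minRayleigh_le (A + σ • B) hx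
  have hτ := minRayleigh_le (A + τ • B) hx
  simp only [add_apply, smul_apply, inner_add_left, real_inner_smul_left, smul_eq_mul]
    at hσ hτ hxmin ⊢
  rw [← hxmin, ← one_mul ⟪A x, x⟫, ← hab]
  nlinarith [mul_le_mul_of_nonneg_left hσ ha, mul_le_mul_of_nonneg_left hτ hb]

lemma continuous_minRayleigh_add_smul (A B : E →ₗ[ℝ] E) :
    Continuous fun τ : ℝ => minRayleigh (A + τ • B) :=
  continuousOn_univ.1 ((concaveOn_minRayleigh_add_smul A B).continuousOn isOpen_univ)

lemma exists_forall_minRayleigh_add_smul_le (A B : E →ₗ[ℝ] E) {u v : E} (hu : 0 < ⟪B u, u⟫)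
    (hv : ⟪B v, v⟫ < 0) :
    ∃ τ₀ : ℝ, ∀ τ : ℝ, minRayleigh (A + τ • B) ≤ minRayleigh (A + τ₀ • B) := by
  refine (continuous_minRayleigh_add_smul A B).exists_forall_ge ?_
  rw [cocompact_eq_atBot_atTop, tendsto_sup]
  refine ⟨tendsto_minRayleigh_add_smul_atBot A B hu, ?_⟩
  have hv' : 0 < ⟪(-B) v, v⟫ := by simpa [inner_neg_left] using hv
  simpa [Function.comp_def, neg_smul_neg] using
    (tendsto_minRayleigh_add_smul_atBot A (-B) hv').comp tendsto_neg_atTop_atBot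

lemma exists_minRayleigh_lt_minRayleigh_add_smul (C B : E →ₗ[ℝ] E)
    (hB : ∀ x ∈ sphere (0 : E) 1, ⟪C x, x⟫ = minRayleigh C → 0 < ⟪B x, x⟫) :
    ∃ δ > (0 : ℝ), minRayleigh C < minRayleigh (C + δ • B) := by
  set W := sphere (0 : E) 1 ∩ {x | ⟪B x, x⟫ ≤ 0}
  have hW : IsCompact W :=
    (isCompact_sphere 0 1).inter_right (isClosed_le (by fun_prop) (by fun_prop))
  obtain ⟨μ, hμ, hWμ⟩ : ∃ μ, minRayleigh C < μ ∧ ∀ x ∈ W, μ ≤ ⟪C x, x⟫ :=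
    hW.exists_forall_le' (by fun_prop) fun x hx =>
      (minRayleigh_le C hx.1).lt_of_ne fun h => (hB x hx.1 h.symm).not_ge hx.2
  obtain ⟨δ, hδ, hδμ⟩ := exists_pos_mul_lt (sub_pos.2 hμ) (-minRayleigh B)
  refine ⟨δ, hδ, ?_⟩
  obtain ⟨x, hx, hxmin⟩ := exists_inner_map_self_eq_minRayleigh (C + δ • B)
  rw [← hxmin, add_apply, smul_apply, inner_add_left, real_inner_smul_left]
  rcases le_or_gt ⟪B x, x⟫ 0 with hBx | hBx
  · nlinarith [hWμ x ⟨hx, hBx⟩, minRayleigh_le B hx]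
  · nlinarith [minRayleigh_le C hx, mul_pos hδ hBx]

lemma IsSymmetric.exists_inner_map_self_eq_zero_of_forall_minRayleigh_add_smul_le
    {C : E →ₗ[ℝ] E} (hC : C.IsSymmetric) (B : E →ₗ[ℝ] E)
    (hmax : ∀ δ : ℝ, minRayleigh (C + δ • B) ≤ minRayleigh C) :
    ∃ z ≠ 0, C z = minRayleigh C • z ∧ ⟪B z, z⟫ = 0 := by
  by_contra! hiso
  set V := eigenspace C (minRayleigh C)
  have hV : ∀ x ∈ sphere (0 : E) 1, ⟪C x, x⟫ = minRayleigh C → x ∈ V := fun x hx hmin =>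
    mem_eigenspace_iff.2 (hC.apply_eq_minRayleigh_smul hx hmin)
  have hB : ∀ x ∈ sphere (0 : E) 1, ⟪C x, x⟫ = minRayleigh C → ⟪B x, x⟫ ≠ 0 := fun x hx hmin =>
    hiso x (ne_zero_of_mem_unit_sphere ⟨x, hx⟩) (mem_eigenspace_iff.1 (hV x hx hmin))
  have hpos : ¬ ∀ x ∈ sphere (0 : E) 1, ⟪C x, x⟫ = minRayleigh C → 0 < ⟪B x, x⟫ := fun h =>
    let ⟨δ, _, hδ⟩ := exists_minRayleigh_lt_minRayleigh_add_smul C B h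
    (hmax δ).not_gt hδ
  have hneg : ¬ ∀ x ∈ sphere (0 : E) 1, ⟪C x, x⟫ = minRayleigh C → 0 < ⟪(-B) x, x⟫ := fun h =>
    let ⟨δ, _, hδ⟩ := exists_minRayleigh_lt_minRayleigh_add_smul C (-B) h
    (hmax (-δ)).not_gt (by rwa [smul_neg, ← neg_smul] at hδ)
  push Not at hpos hneg
  obtain ⟨x, hx, hxmin, hBx⟩ := hneg
  obtain ⟨y, hy, hymin, hBy⟩ := hpos
  rw [neg_apply, inner_neg_left, neg_nonpos] at hBx
  obtain ⟨z, hzV, hz0, hBz⟩ := exists_mem_ne_zero_inner_map_self_eq_zero B V (hV x hx hxmin)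
    (hV y hy hymin) (hBx.lt_of_ne' (hB x hx hxmin)) (hBy.lt_of_ne (hB y hy hymin))
  exact hiso z hz0 (mem_eigenspace_iff.1 hzV) hBz

end LinearMap

/-- **Strict Finsler's lemma.**
Let `A`, `B` be self-adjoint endomorphisms of a finite-dimensional real inner product
space `E`, with `B` indefinite.  Then `⟪A x, x⟫ > 0` for every `x ≠ 0` with
`⟪B x, x⟫ = 0` if and only if `A + τ • B` is positive definite for some `τ ∈ ℝ`. -/
theorem finsler_lemma_strict
    {E : Type*} [NormedAddCommGroup E] [InnerProductSpace ℝ E] [FiniteDimensional ℝ E]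
    (A B : E →ₗ[ℝ] E) (hA : A.IsSymmetric) (hB : B.IsSymmetric)
    (hBpos : ∃ u : E, 0 < ⟪B u, u⟫) (hBneg : ∃ v : E, ⟪B v, v⟫ < 0) :
    (∀ x : E, x ≠ 0 → ⟪B x, x⟫ = 0 → 0 < ⟪A x, x⟫) ↔
      ∃ τ : ℝ, ∀ x : E, x ≠ 0 → 0 < ⟪(A + τ • B) x, x⟫ := by
  refine ⟨fun hA0 => ?_, fun ⟨τ, hτ⟩ x hx hBx => ?_⟩
  · obtain ⟨u, hu⟩ := hBpos
    obtain ⟨v, hv⟩ := hBneg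
    have : Nontrivial E := ⟨u, 0, by rintro rfl; simp at hu⟩
    obtain ⟨τ₀, hτ₀⟩ := LinearMap.exists_forall_minRayleigh_add_smul_le A B hu hv
    refine ⟨τ₀, fun x hx => ?_⟩
    refine (mul_pos ?_ (pow_pos (norm_pos_iff.2 hx) 2)).trans_le
      (LinearMap.minRayleigh_mul_norm_sq_le _ x)
    by_contra! hle
    have hC : (A + τ₀ • B).IsSymmetric := hA.add (hB.smul (conj_trivial τ₀))
    obtain ⟨z, hz0, hCz, hBz⟩ := hC.exists_inner_map_self_eq_zero_of_forall_minRayleigh_add_smul_le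
      B fun δ => by simpa only [add_assoc, add_smul] using hτ₀ (τ₀ + δ)
    have hAz : ⟪A z, z⟫ = LinearMap.minRayleigh (A + τ₀ • B) * ‖z‖ ^ 2 := by
      rw [← real_inner_self_eq_norm_sq, ← real_inner_smul_left, ← hCz, LinearMap.add_apply,
        LinearMap.smul_apply, inner_add_left, real_inner_smul_left, hBz, mul_zero, add_zero]
    exact (hA0 z hz0 hBz).not_ge (hAz ▸ mul_nonpos_of_nonpos_of_nonneg hle (sq_nonneg _))
  · simpa [inner_add_left, real_inner_smul_left, hBx] using hτ x hx
end

section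
/- Let E be a finite-dimensional real inner product space, let A, B be self-adjoint linear endomorphisms of E, and assume B is indefinite (there exist u, v with ⟨B u, u⟩ > 0 and ⟨B v, v⟩ < 0) and injective. Suppose the set S = {τ ∈ ℝ : A + τ·B is positive semidefinite} is nonempty. Then: (1) S is a compact interval, i.e., S = [τ_min, τ_max] for some τ_min ≤ τ_max; and (2) S is a singleton (τ_min = τ_max) if and only if there exists x ≠ 0 with ⟨B x, x⟩ = 0 and ⟨A x, x⟩ = 0. -/
/-!
The pencil `A + τ • B` is positive semidefinite exactly when `τ` lies in every half-line
`{τ | 0 ≤ ⟪A x, x⟫ + τ * ⟪B x, x⟫}`, so the set of such `τ` is a closed interval, bounded on each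
side because `B` takes both signs. If `x ≠ 0` is isotropic for both `A` and `B`, then `x` is a
null vector, hence a kernel vector, of every positive semidefinite `A + τ • B`, so two such `τ`
differ by a multiple of `B x ≠ 0`. Conversely, at an endpoint `τ` no positive perturbation in the
outward direction stays semidefinite; by compactness of the unit sphere this produces null
vectors of `A + τ • B` on which `B` is `≤ 0`, resp. `≥ 0`. If the interval is a point, both
kinds exist, they lie in the kernel of `A + τ • B`, and a root of the quadratic
`t ↦ ⟪B (x + t • y), x + t • y⟫` gives the common isotropic vector.
-/

open scoped RealInnerProductSpace
open Set

section InnerMapSelf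

variable {E : Type*} [NormedAddCommGroup E] [InnerProductSpace ℝ E]

theorem inner_map_smul_self (T : E →ₗ[ℝ] E) (c : ℝ) (x : E) :
    ⟪T (c • x), c • x⟫ = c ^ 2 * ⟪T x, x⟫ := by
  simp only [map_smul, real_inner_smul_left, real_inner_smul_right]
  ring

theorem inner_add_smul_map_self (A B : E →ₗ[ℝ] E) (τ : ℝ) (x : E) :
    ⟪(A + τ • B) x, x⟫ = ⟪A x, x⟫ + τ * ⟪B x, x⟫ := by
  simp only [LinearMap.add_apply, LinearMap.smul_apply, inner_add_left, real_inner_smul_left]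

theorem LinearMap.IsSymmetric.inner_map_add_smul_self {T : E →ₗ[ℝ] E} (hT : T.IsSymmetric)
    (x y : E) (t : ℝ) :
    ⟪T (x + t • y), x + t • y⟫ = ⟪T y, y⟫ * (t * t) + 2 * ⟪T x, y⟫ * t + ⟪T x, x⟫ := by
  have hyx : ⟪T y, x⟫ = ⟪T x, y⟫ := by rw [hT y x, real_inner_comm]
  simp only [map_add, map_smul, inner_add_left, inner_add_right, real_inner_smul_left,
    real_inner_smul_right, hyx]
  ring

theorem inner_map_self_nonneg_of_norm_eq_one {T : E →ₗ[ℝ] E}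
    (h : ∀ x, ‖x‖ = 1 → 0 ≤ ⟪T x, x⟫) (x : E) : 0 ≤ ⟪T x, x⟫ := by
  rcases eq_or_ne x 0 with rfl | hx
  · simp
  have hscale := inner_map_smul_self T ‖x‖ ((‖x‖⁻¹ : ℝ) • x)
  rw [smul_inv_smul₀ (norm_ne_zero_iff.2 hx)] at hscale
  rw [hscale]
  exact mul_nonneg (sq_nonneg _) (h _ (norm_smul_inv_norm hx))

/-- The discriminant of `t ↦ ⟪T (x + t • y), x + t • y⟫ ≥ 0` forces `⟪T x, y⟫ = 0`. -/
theorem LinearMap.IsSymmetric.apply_eq_zero_of_inner_map_self_eq_zero {T : E →ₗ[ℝ] E}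
    (hT : T.IsSymmetric) (hpsd : ∀ x, 0 ≤ ⟪T x, x⟫) {x : E} (hx : ⟪T x, x⟫ = 0) : T x = 0 := by
  have horth : ∀ y, ⟪T x, y⟫ = 0 := fun y => by
    have hdisc := discrim_le_zero fun t => (hT.inner_map_add_smul_self x y t ▸ hpsd _ :
      0 ≤ ⟪T y, y⟫ * (t * t) + 2 * ⟪T x, y⟫ * t + ⟪T x, x⟫)
    rw [hx, discrim] at hdisc
    nlinarith [sq_nonneg ⟪T x, y⟫]
  exact inner_self_eq_zero.1 (horth (T x))

theorem LinearMap.IsSymmetric.exists_inner_map_add_smul_self_eq_zero {T : E →ₗ[ℝ] E}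
    (hT : T.IsSymmetric) {x y : E} (hx : ⟪T x, x⟫ < 0) (hy : 0 < ⟪T y, y⟫) :
    ∃ t : ℝ, x + t • y ≠ 0 ∧ ⟪T (x + t • y), x + t • y⟫ = 0 := by
  have hdisc : 0 ≤ discrim ⟪T y, y⟫ (2 * ⟪T x, y⟫) ⟪T x, x⟫ := by
    rw [discrim]
    nlinarith [sq_nonneg ⟪T x, y⟫]
  obtain ⟨t, ht⟩ := exists_quadratic_eq_zero hy.ne'
    ⟨_, (Real.mul_self_sqrt hdisc).symm⟩
  refine ⟨t, fun h0 => ?_, by rw [hT.inner_map_add_smul_self, ← ht]⟩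
  have hxy : x = (-t) • y := by rw [neg_smul, eq_neg_iff_add_eq_zero, h0]
  have := inner_map_smul_self T (-t) y
  rw [← hxy] at this
  nlinarith [sq_nonneg t]

theorem LinearMap.IsSymmetric.exists_isotropic_of_null {C B : E →ₗ[ℝ] E} (hC : C.IsSymmetric)
    (hCpsd : ∀ x, 0 ≤ ⟪C x, x⟫) (hB : B.IsSymmetric) {x y : E} (hx0 : x ≠ 0) (hy0 : y ≠ 0)
    (hxC : ⟪C x, x⟫ = 0) (hyC : ⟪C y, y⟫ = 0) (hxB : ⟪B x, x⟫ ≤ 0) (hyB : 0 ≤ ⟪B y, y⟫) :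
    ∃ z ≠ 0, ⟪C z, z⟫ = 0 ∧ ⟪B z, z⟫ = 0 := by
  rcases hxB.eq_or_lt with hxB | hxB
  · exact ⟨x, hx0, hxC, hxB⟩
  rcases hyB.eq_or_lt with hyB | hyB
  · exact ⟨y, hy0, hyC, hyB.symm⟩
  obtain ⟨t, hz0, hzB⟩ := hB.exists_inner_map_add_smul_self_eq_zero hxB hyB
  refine ⟨x + t • y, hz0, ?_, hzB⟩
  rw [map_add, map_smul, hC.apply_eq_zero_of_inner_map_self_eq_zero hCpsd hxC,
    hC.apply_eq_zero_of_inner_map_self_eq_zero hCpsd hyC, smul_zero, add_zero, inner_zero_left]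

variable [FiniteDimensional ℝ E]

theorem continuous_inner_map_self (T : E →ₗ[ℝ] E) : Continuous fun x => ⟪T x, x⟫ :=
  T.continuous_of_finiteDimensional.inner continuous_id

/-- On the unit sphere, `⟪C x, x⟫` has a positive minimum `m` where `⟪D x, x⟫ ≤ 0`, and
`-⟪D x, x⟫` is bounded by some `M ≥ 0`; then `ε = m / (M + 1)` works. -/
theorem exists_pos_forall_inner_add_smul_map_self_nonneg {C D : E →ₗ[ℝ] E}
    (hC : ∀ x, 0 ≤ ⟪C x, x⟫) (hD : ∀ x ≠ 0, ⟪C x, x⟫ = 0 → 0 < ⟪D x, x⟫) :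
    ∃ ε : ℝ, 0 < ε ∧ ∀ x, 0 ≤ ⟪(C + ε • D) x, x⟫ := by
  have hK : IsCompact (Metric.sphere (0 : E) 1 ∩ {x | ⟪D x, x⟫ ≤ 0}) :=
    (isCompact_sphere 0 1).inter_right (isClosed_le (continuous_inner_map_self D) continuous_const)
  obtain ⟨m, hm, hmK⟩ := hK.exists_forall_le' (continuous_inner_map_self C).continuousOn
    fun x ⟨hx1, hxD⟩ => (hC x).lt_of_ne' fun hxC =>
      (hD x (ne_zero_of_mem_unit_sphere ⟨x, hx1⟩) hxC).not_ge hxD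
  obtain ⟨M, hM⟩ := (isCompact_sphere (0 : E) 1).bddAbove_image
    (continuous_inner_map_self D).neg.continuousOn
  have hM' : ∀ x, ‖x‖ = 1 → -⟪D x, x⟫ ≤ max M 0 := fun x hx =>
    (hM ⟨x, mem_sphere_zero_iff_norm.2 hx, rfl⟩).trans (le_max_left _ _)
  set ε := m / (max M 0 + 1)
  have hε : 0 < ε := by positivity
  have hεM : ε * max M 0 < m := by
    rw [div_mul_eq_mul_div, div_lt_iff₀ (by positivity)]
    nlinarith [le_max_right M 0]
  refine ⟨ε, hε, inner_map_self_nonneg_of_norm_eq_one fun x hx => ?_⟩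
  rw [inner_add_smul_map_self]
  by_cases hxD : ⟪D x, x⟫ ≤ 0
  · linarith [hmK x ⟨mem_sphere_zero_iff_norm.2 hx, hxD⟩,
      mul_le_mul_of_nonneg_left (hM' x hx) hε.le]
  · exact add_nonneg (hC x) (mul_nonneg hε.le (not_le.1 hxD).le)

end InnerMapSelf

section Pencil

variable {E : Type*} [NormedAddCommGroup E] [InnerProductSpace ℝ E] {A B : E →ₗ[ℝ] E}

def psdPencil (A B : E →ₗ[ℝ] E) : Set ℝ :=
  {τ : ℝ | ∀ x : E, 0 ≤ ⟪(A + τ • B) x, x⟫}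

theorem mem_psdPencil {τ : ℝ} :
    τ ∈ psdPencil A B ↔ ∀ x, 0 ≤ ⟪A x, x⟫ + τ * ⟪B x, x⟫ :=
  forall_congr' fun x => by rw [inner_add_smul_map_self]

theorem mem_psdPencil_neg {τ : ℝ} : τ ∈ psdPencil A (-B) ↔ -τ ∈ psdPencil A B := by
  show (∀ x, 0 ≤ ⟪(A + τ • -B) x, x⟫) ↔ ∀ x, 0 ≤ ⟪(A + -τ • B) x, x⟫
  rw [smul_neg, neg_smul]

theorem isClosed_psdPencil : IsClosed (psdPencil A B) := by
  have : psdPencil A B = ⋂ x, {τ | 0 ≤ ⟪A x, x⟫ + τ * ⟪B x, x⟫} := by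
    ext τ
    simp only [mem_psdPencil, mem_iInter]
    rfl
  rw [this]
  exact isClosed_iInter fun x => isClosed_le continuous_const (by fun_prop)

theorem ordConnected_psdPencil : (psdPencil A B).OrdConnected := by
  refine ⟨fun σ hσ ρ hρ τ ⟨hστ, hτρ⟩ => mem_psdPencil.2 fun x => ?_⟩
  have hσx := mem_psdPencil.1 hσ x
  have hρx := mem_psdPencil.1 hρ x
  rcases le_total 0 ⟪B x, x⟫ with hB | hB <;> nlinarith

theorem bddAbove_psdPencil {v : E} (hv : ⟪B v, v⟫ < 0) : BddAbove (psdPencil A B) :=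
  ⟨⟪A v, v⟫ / -⟪B v, v⟫, fun τ hτ => by
    rw [le_div_iff₀ (neg_pos.2 hv)]
    linarith [mem_psdPencil.1 hτ v]⟩

theorem bddBelow_psdPencil {u : E} (hu : 0 < ⟪B u, u⟫) : BddBelow (psdPencil A B) :=
  ⟨-(⟪A u, u⟫ / ⟪B u, u⟫), fun τ hτ => by
    rw [neg_le, le_div_iff₀ hu]
    linarith [mem_psdPencil.1 hτ u]⟩

theorem exists_psdPencil_eq_Icc (hne : (psdPencil A B).Nonempty)
    (hbdd : BddBelow (psdPencil A B)) (hbdd' : BddAbove (psdPencil A B)) :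
    ∃ a b, a ≤ b ∧ psdPencil A B = Icc a b :=
  ⟨_, _, csInf_le_csSup hne hbdd hbdd',
    eq_Icc_csInf_csSup_of_connected_bdd_closed ⟨hne, ordConnected_psdPencil.isPreconnected⟩
      hbdd hbdd' isClosed_psdPencil⟩

theorem LinearMap.IsSymmetric.add_smul {B : E →ₗ[ℝ] E} (hA : A.IsSymmetric) (hB : B.IsSymmetric)
    (τ : ℝ) : (A + τ • B).IsSymmetric :=
  hA.add (hB.smul (conj_trivial τ))

theorem eq_of_mem_psdPencil_of_isotropic (hA : A.IsSymmetric) (hB : B.IsSymmetric)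
    (hBinj : Function.Injective B) {x : E} (hx0 : x ≠ 0) (hxB : ⟪B x, x⟫ = 0)
    (hxA : ⟪A x, x⟫ = 0) {σ τ : ℝ} (hσ : σ ∈ psdPencil A B) (hτ : τ ∈ psdPencil A B) :
    σ = τ := by
  have hker : ∀ ρ ∈ psdPencil A B, A x + ρ • B x = 0 := fun ρ hρ =>
    (hA.add_smul hB ρ).apply_eq_zero_of_inner_map_self_eq_zero hρ
      (by rw [inner_add_smul_map_self, hxA, hxB, mul_zero, add_zero])
  have hBx : B x ≠ 0 := map_zero B ▸ hBinj.ne hx0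
  have : (σ - τ) • B x = 0 := by
    rw [sub_smul, ← add_sub_add_left_eq_sub _ _ (A x), hker σ hσ, hker τ hτ, sub_zero]
  exact sub_eq_zero.1 ((smul_eq_zero.1 this).resolve_right hBx)

theorem exists_null_inner_nonpos_of_isGreatest [FiniteDimensional ℝ E] {τ : ℝ}
    (hτ : IsGreatest (psdPencil A B) τ) :
    ∃ x ≠ 0, ⟪(A + τ • B) x, x⟫ = 0 ∧ ⟪B x, x⟫ ≤ 0 := by
  by_contra! hpos
  obtain ⟨ε, hε, hpsd⟩ := exists_pos_forall_inner_add_smul_map_self_nonneg hτ.1 hpos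
  have hτε : τ + ε ∈ psdPencil A B := by
    simpa only [psdPencil, mem_ofPred_eq, add_smul, ← add_assoc] using hpsd
  linarith [hτ.2 hτε]

theorem exists_isotropic_of_isLeast_of_isGreatest [FiniteDimensional ℝ E] (hA : A.IsSymmetric)
    (hB : B.IsSymmetric) {τ : ℝ} (hleast : IsLeast (psdPencil A B) τ)
    (hgreatest : IsGreatest (psdPencil A B) τ) :
    ∃ x ≠ 0, ⟪B x, x⟫ = 0 ∧ ⟪A x, x⟫ = 0 := by
  obtain ⟨x, hx0, hxC, hxB⟩ := exists_null_inner_nonpos_of_isGreatest hgreatest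
  have hgreatest' : IsGreatest (psdPencil A (-B)) (-τ) :=
    ⟨mem_psdPencil_neg.2 (by rw [neg_neg]; exact hleast.1),
      fun σ hσ => le_neg_of_le_neg (hleast.2 (mem_psdPencil_neg.1 hσ))⟩
  obtain ⟨y, hy0, hyC, hyB⟩ := exists_null_inner_nonpos_of_isGreatest hgreatest'
  rw [neg_smul_neg] at hyC
  rw [LinearMap.neg_apply, inner_neg_left, neg_nonpos] at hyB
  obtain ⟨z, hz0, hzC, hzB⟩ := (hA.add_smul hB τ).exists_isotropic_of_null hgreatest.1 hB
    hx0 hy0 hxC hyC hxB hyB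
  refine ⟨z, hz0, hzB, ?_⟩
  rwa [inner_add_smul_map_self, hzB, mul_zero, add_zero] at hzC

end Pencil

/-- The set `S = {τ : A + τ • B ⪰ 0}`, for self-adjoint endomorphisms `A`, `B` of a
finite-dimensional real inner product space with `B` indefinite and injective, is
(when nonempty) a compact interval `[τ_min, τ_max]`, which degenerates to a point if
and only if there is `x ≠ 0` with `⟪B x, x⟫ = 0` and `⟪A x, x⟫ = 0`. -/
theorem finsler_thorpe_interval
    {E : Type*} [NormedAddCommGroup E] [InnerProductSpace ℝ E] [FiniteDimensional ℝ E]
    (A B : E →ₗ[ℝ] E) (hA : A.IsSymmetric) (hB : B.IsSymmetric)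
    (hBpos : ∃ u : E, 0 < ⟪B u, u⟫) (hBneg : ∃ v : E, ⟪B v, v⟫ < 0)
    (hBinj : Function.Injective B)
    (hne : {τ : ℝ | ∀ x : E, 0 ≤ ⟪(A + τ • B) x, x⟫}.Nonempty) :
    ∃ τmin τmax : ℝ, τmin ≤ τmax ∧
      {τ : ℝ | ∀ x : E, 0 ≤ ⟪(A + τ • B) x, x⟫} = Set.Icc τmin τmax ∧
      (τmin = τmax ↔ ∃ x : E, x ≠ 0 ∧ ⟪B x, x⟫ = 0 ∧ ⟪A x, x⟫ = 0) := by
  obtain ⟨u, hu⟩ := hBpos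
  obtain ⟨v, hv⟩ := hBneg
  obtain ⟨τmin, τmax, hle, hS⟩ :=
    exists_psdPencil_eq_Icc hne (bddBelow_psdPencil (A := A) hu) (bddAbove_psdPencil hv)
  refine ⟨τmin, τmax, hle, hS, fun heq => ?_, fun ⟨x, hx0, hxB, hxA⟩ => ?_⟩
  · have hleast : IsLeast (psdPencil A B) τmax := by rw [hS, ← heq]; exact isLeast_Icc le_rfl
    have hgreatest : IsGreatest (psdPencil A B) τmax := by rw [hS]; exact isGreatest_Icc hle
    exact exists_isotropic_of_isLeast_of_isGreatest hA hB hleast hgreatest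
  · have hmin : τmin ∈ psdPencil A B := by rw [hS]; exact left_mem_Icc.2 hle
    have hmax : τmax ∈ psdPencil A B := by rw [hS]; exact right_mem_Icc.2 hle
    exact eq_of_mem_psdPencil_of_isotropic hA hB hBinj hx0 hxB hxA hmin hmax
end

section
/- (Finsler–Thorpe trick, nonnegative version; Proposition 2.2 of the paper in coordinates.) Let r : Fin 4 → Fin 4 → Fin 4 → Fin 4 → ℝ be an algebraic curvature tensor in coordinates: r i j k l = −r j i k l = −r i j l k, r i j k l = r k l i j, and r i j k l + r j k i l + r k i j l = 0. For an antisymmetric ω : Fin 4 → Fin 4 → ℝ set Q(ω) := (1/4)·Σ_{i,j,k,l} r i j k l · ω i j · ω l k and P(ω) := ω 0 1 · ω 2 3 − ω 0 2 · ω 1 3 + ω 0 3 · ω 1 2. Then the following are equivalent: (i) Σ_{i,j,k,l} r i j k l · x i · y j · y k · x l ≥ 0 for all x, y : Fin 4 → ℝ (i.e., sec ≥ 0); (ii) there exists τ ∈ ℝ such that Q(ω) + τ·P(ω) ≥ 0 for every antisymmetric ω : Fin 4 → Fin 4 → ℝ. -/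
/-!
An antisymmetric `ω` on `ℝ⁴` is decomposable, `ω = x ∧ y`, exactly when its Pfaffian `P ω`
vanishes (Plücker), and `Q (x ∧ y)` is the sectional curvature numerator. So `sec ≥ 0` says
that `Q ≥ 0` on the null cone of `P`, and the theorem is an instance of Finsler's lemma for the
indefinite form `P`. For that, take `P a + P b = 0`: some pair `k a + b`, `a - k b` is `P`-null,
and `Q (k a + b) + Q (a - k b) = (k² + 1) (Q a + Q b)` gives `Q a + Q b ≥ 0`. After rescaling
this says `-Q a / P a ≤ Q b / -P b` whenever `P a > 0 > P b`, and any `τ` separating the two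
sides works.
-/

open Finset

namespace QuadraticMap

variable {V : Type*} [AddCommGroup V] [Module ℝ V] {Q P : QuadraticMap ℝ V ℝ}

theorem map_smul_add_add_map_sub_smul (Q : QuadraticMap ℝ V ℝ) (k : ℝ) (a b : V) :
    Q (k • a + b) + Q (a - k • b) = (k ^ 2 + 1) * (Q a + Q b) := by
  rw [QuadraticMap.map_add Q, sub_eq_add_neg, QuadraticMap.map_add Q, ← neg_smul,
    polar_smul_left, polar_smul_right, QuadraticMap.map_smul, QuadraticMap.map_smul]
  simp only [smul_eq_mul]
  ring

theorem exists_map_smul_add_eq_zero {a b : V} (hab : P a + P b = 0) :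
    ∃ k : ℝ, P (k • a + b) = 0 := by
  rcases eq_or_ne (P a) 0 with ha | ha
  · exact ⟨0, by simpa [ha] using hab⟩
  have hdiscrim : 0 ≤ discrim (P a) (polar P a b) (P b) := by
    rw [discrim, eq_neg_of_add_eq_zero_right hab]
    nlinarith [sq_nonneg (P a), sq_nonneg (polar P a b)]
  obtain ⟨k, hk⟩ := exists_quadratic_eq_zero ha ⟨_, (Real.mul_self_sqrt hdiscrim).symm⟩
  refine ⟨k, ?_⟩
  rw [QuadraticMap.map_add P, QuadraticMap.map_smul, polar_smul_left, smul_eq_mul, smul_eq_mul,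
    ← hk]
  ring

theorem add_nonneg_of_map_add_eq_zero (h : ∀ v, P v = 0 → 0 ≤ Q v) {a b : V}
    (hab : P a + P b = 0) : 0 ≤ Q a + Q b := by
  obtain ⟨k, hk⟩ := exists_map_smul_add_eq_zero hab
  have hk' : P (a - k • b) = 0 := by
    linear_combination P.map_smul_add_add_map_sub_smul k a b - hk + (k ^ 2 + 1) * hab
  refine nonneg_of_mul_nonneg_right ?_ (by positivity : (0 : ℝ) < k ^ 2 + 1)
  rw [← Q.map_smul_add_add_map_sub_smul]
  exact add_nonneg (h _ hk) (h _ hk')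

theorem neg_div_le_div_neg (h : ∀ v, P v = 0 → 0 ≤ Q v) {a b : V}
    (ha : 0 < P a) (hb : P b < 0) : -Q a / P a ≤ Q b / -P b := by
  have ht : √(-P b / P a) * √(-P b / P a) = -P b / P a :=
    Real.mul_self_sqrt (div_nonneg (neg_nonneg.2 hb.le) ha.le)
  have hQ := add_nonneg_of_map_add_eq_zero h (a := √(-P b / P a) • a) (b := b) (by
    rw [QuadraticMap.map_smul, smul_eq_mul, ht]
    field_simp
    ring)
  rw [QuadraticMap.map_smul, smul_eq_mul, ht] at hQ
  rw [div_le_div_iff₀ ha (neg_pos.2 hb)]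
  have := mul_nonneg hQ ha.le
  field_simp at this
  linarith

theorem exists_forall_nonneg_add_mul (h : ∀ v, P v = 0 → 0 ≤ Q v)
    (hpos : ∃ a, 0 < P a) (hneg : ∃ b, P b < 0) : ∃ τ : ℝ, ∀ v, 0 ≤ Q v + τ * P v := by
  set S := (fun a => -Q a / P a) '' {a | 0 < P a}
  obtain ⟨a₀, ha₀⟩ := hpos
  obtain ⟨b₀, hb₀⟩ := hneg
  have hbdd : BddAbove S := ⟨Q b₀ / -P b₀, by
    rintro _ ⟨a, ha, rfl⟩
    exact neg_div_le_div_neg h ha hb₀⟩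
  refine ⟨sSup S, fun v => ?_⟩
  rcases lt_trichotomy (P v) 0 with hv | hv | hv
  · have : sSup S ≤ Q v / -P v := csSup_le ⟨_, a₀, ha₀, rfl⟩ (by
      rintro _ ⟨a, ha, rfl⟩
      exact neg_div_le_div_neg h ha hv)
    rw [le_div_iff₀ (neg_pos.2 hv)] at this
    linarith
  · simpa [hv] using h v hv
  · have : -Q v / P v ≤ sSup S := le_csSup hbdd ⟨v, hv, rfl⟩
    rw [div_le_iff₀ hv] at this
    linarith

end QuadraticMap

variable {ι : Type*}

def antisymmSubmodule (ι : Type*) : Submodule ℝ (ι → ι → ℝ) where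
  carrier := {ω | ∀ i j, ω i j = -ω j i}
  add_mem' ha hb i j := by simp [ha i j, hb i j, add_comm]
  zero_mem' _ _ := by simp
  smul_mem' c ω hω i j := by simp [hω i j]

def wedge (x y : ι → ℝ) : ι → ι → ℝ := fun i j => x i * y j - x j * y i

theorem wedge_mem_antisymmSubmodule (x y : ι → ℝ) : wedge x y ∈ antisymmSubmodule ι :=
  fun i j => by simp only [wedge]; ring

theorem sum_sum_mul_wedge [Fintype ι] {c : ι → ι → ℝ} (hc : ∀ i j, c i j = -c j i)
    (x y : ι → ℝ) :
    ∑ i, ∑ j, c i j * wedge x y i j = 2 * ∑ i, ∑ j, c i j * x i * y j := by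
  have hswap : ∑ i, ∑ j, c i j * (x j * y i) = -∑ i, ∑ j, c i j * x i * y j := by
    rw [sum_comm, ← sum_neg_distrib]
    refine sum_congr rfl fun i _ => ?_
    rw [← sum_neg_distrib]
    refine sum_congr rfl fun j _ => ?_
    rw [hc]
    ring
  simp only [wedge, mul_sub, sum_sub_distrib, hswap, mul_assoc]
  ring

noncomputable def curvatureForm [Fintype ι] (r : ι → ι → ι → ι → ℝ) :
    QuadraticMap ℝ (ι → ι → ℝ) ℝ :=
  (1 / 4 : ℝ) • LinearMap.BilinMap.toQuadraticMap (LinearMap.mk₂ ℝ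
    (fun ω η => ∑ i, ∑ j, ∑ k, ∑ l, r i j k l * ω i j * η l k)
    (fun _ _ _ => by simp only [Pi.add_apply, mul_add, add_mul, sum_add_distrib])
    (fun _ _ _ => by simp only [Pi.smul_apply, smul_eq_mul, mul_sum]; congr! 4; ring)
    (fun _ _ _ => by simp only [Pi.add_apply, mul_add, sum_add_distrib])
    (fun _ _ _ => by simp only [Pi.smul_apply, smul_eq_mul, mul_sum]; congr! 4; ring))

theorem curvatureForm_apply [Fintype ι] (r : ι → ι → ι → ι → ℝ) (ω : ι → ι → ℝ) :
    curvatureForm r ω = (1 / 4) * ∑ i, ∑ j, ∑ k, ∑ l, r i j k l * ω i j * ω l k := rfl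

theorem curvatureForm_wedge [Fintype ι] {r : ι → ι → ι → ι → ℝ}
    (hr1 : ∀ i j k l, r i j k l = -r j i k l) (hr2 : ∀ i j k l, r i j k l = -r i j l k)
    (x y : ι → ℝ) :
    curvatureForm r (wedge x y) = ∑ i, ∑ j, ∑ k, ∑ l, r i j k l * x i * y j * y k * x l := by
  set s : ι → ι → ℝ := fun i j => 2 * ∑ k, ∑ l, r i j k l * y k * x l
  have hs : ∀ i j, s i j = -s j i := fun i j => by
    simp only [s, hr1 j i, neg_mul, sum_neg_distrib, mul_neg, neg_neg]
  calc curvatureForm r (wedge x y)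
      = (1 / 4) * ∑ i, ∑ j, (∑ k, ∑ l, r i j k l * wedge y x k l) * wedge x y i j := by
        rw [curvatureForm_apply]
        simp only [sum_mul]
        congr! 5
        simp only [wedge]
        ring
    _ = (1 / 4) * ∑ i, ∑ j, s i j * wedge x y i j := by
        simp only [s, sum_sum_mul_wedge (hr2 _ _)]
    _ = ∑ i, ∑ j, ∑ k, ∑ l, r i j k l * x i * y j * y k * x l := by
        rw [sum_sum_mul_wedge hs]
        simp only [s, mul_sum, sum_mul]
        congr! 4
        ring

def pfaffianForm : QuadraticMap ℝ (Fin 4 → Fin 4 → ℝ) ℝ :=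
  LinearMap.BilinMap.toQuadraticMap <| LinearMap.mk₂ ℝ
    (fun ω η => ω 0 1 * η 2 3 - ω 0 2 * η 1 3 + ω 0 3 * η 1 2)
    (fun _ _ _ => by simp only [Pi.add_apply]; ring)
    (fun _ _ _ => by simp only [Pi.smul_apply, smul_eq_mul]; ring)
    (fun _ _ _ => by simp only [Pi.add_apply]; ring)
    (fun _ _ _ => by simp only [Pi.smul_apply, smul_eq_mul]; ring)

theorem pfaffianForm_apply (ω : Fin 4 → Fin 4 → ℝ) :
    pfaffianForm ω = ω 0 1 * ω 2 3 - ω 0 2 * ω 1 3 + ω 0 3 * ω 1 2 := rfl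

theorem pfaffianForm_wedge (x y : Fin 4 → ℝ) : pfaffianForm (wedge x y) = 0 := by
  simp only [pfaffianForm_apply, wedge]
  ring

theorem exists_pfaffianForm_eq (t : ℝ) :
    ∃ ω ∈ antisymmSubmodule (Fin 4), pfaffianForm ω = t :=
  ⟨wedge (Pi.single 0 1) (Pi.single 1 1) + t • wedge (Pi.single 2 1) (Pi.single 3 1),
    add_mem (wedge_mem_antisymmSubmodule _ _)
      (Submodule.smul_mem _ _ (wedge_mem_antisymmSubmodule _ _)),
    by simp [pfaffianForm_apply, wedge]⟩

/-- The Plücker relations: `ω ∧ ω = 2 Pf(ω) vol`, read off in coordinates. -/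
theorem mul_eq_sub_of_pfaffianForm_eq_zero {ω : Fin 4 → Fin 4 → ℝ}
    (hω : ω ∈ antisymmSubmodule (Fin 4)) (hP : pfaffianForm ω = 0) (i j p q : Fin 4) :
    ω i j * ω p q = ω i p * ω j q - ω i q * ω j p := by
  have hdiag (i) : ω i i = 0 := by linarith [hω i i]
  rw [pfaffianForm_apply] at hP
  fin_cases i <;> fin_cases j <;> fin_cases p <;> fin_cases q <;>
    simp only [Fin.zero_eta, Fin.mk_one, Fin.reduceFinMk, hdiag,
      hω 1 0, hω 2 0, hω 3 0, hω 2 1, hω 3 1, hω 3 2] <;>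
    first | ring1 | linear_combination hP | linear_combination -hP

theorem exists_eq_wedge_of_pfaffianForm_eq_zero {ω : Fin 4 → Fin 4 → ℝ}
    (hω : ω ∈ antisymmSubmodule (Fin 4)) (hP : pfaffianForm ω = 0) :
    ∃ x y : Fin 4 → ℝ, ω = wedge x y := by
  by_cases h0 : ω = 0
  · exact ⟨0, 0, funext₂ fun i j => by simp [h0, wedge]⟩
  obtain ⟨p, q, hpq⟩ : ∃ p q, ω p q ≠ 0 := by
    by_contra! h
    exact h0 (funext₂ h)
  refine ⟨fun i => ω i p / ω p q, fun j => ω j q, funext₂ fun i j => ?_⟩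
  simp only [wedge]
  field_simp
  linear_combination mul_eq_sub_of_pfaffianForm_eq_zero hω hP i j p q

theorem finsler_thorpe_trick_nonneg_general
    (r : Fin 4 → Fin 4 → Fin 4 → Fin 4 → ℝ)
    (hr1 : ∀ i j k l, r i j k l = -r j i k l)
    (hr2 : ∀ i j k l, r i j k l = -r i j l k) :
    (∀ x y : Fin 4 → ℝ,
        0 ≤ ∑ i, ∑ j, ∑ k, ∑ l, r i j k l * x i * y j * y k * x l) ↔
      ∃ τ : ℝ, ∀ ω : Fin 4 → Fin 4 → ℝ, (∀ i j, ω i j = -ω j i) →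
        0 ≤ (1 / 4) * (∑ i, ∑ j, ∑ k, ∑ l, r i j k l * ω i j * ω l k) +
              τ * (ω 0 1 * ω 2 3 - ω 0 2 * ω 1 3 + ω 0 3 * ω 1 2) := by
  set V := antisymmSubmodule (Fin 4)
  constructor
  · intro hsec
    have hnull (ω : V) (hP : pfaffianForm ω = 0) : 0 ≤ curvatureForm r ω := by
      obtain ⟨x, y, hxy⟩ := exists_eq_wedge_of_pfaffianForm_eq_zero ω.2 hP
      rw [hxy, curvatureForm_wedge hr1 hr2]
      exact hsec x y
    obtain ⟨ωpos, hωpos, hPpos⟩ := exists_pfaffianForm_eq 1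
    obtain ⟨ωneg, hωneg, hPneg⟩ := exists_pfaffianForm_eq (-1)
    obtain ⟨τ, hτ⟩ := QuadraticMap.exists_forall_nonneg_add_mul
      (Q := (curvatureForm r).comp V.subtype) (P := pfaffianForm.comp V.subtype) hnull
      ⟨⟨ωpos, hωpos⟩, hPpos ▸ one_pos⟩ ⟨⟨ωneg, hωneg⟩, hPneg ▸ neg_one_lt_zero⟩
    exact ⟨τ, fun ω hω => hτ ⟨ω, hω⟩⟩
  · rintro ⟨τ, hτ⟩ x y
    have := hτ (wedge x y) (wedge_mem_antisymmSubmodule x y)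
    rwa [← curvatureForm_apply, ← pfaffianForm_apply, pfaffianForm_wedge,
      curvatureForm_wedge hr1 hr2, mul_zero, add_zero] at this

/-- **Finsler–Thorpe trick, nonnegative version** (Proposition 2.2 of the paper, in
coordinates).  An algebraic curvature tensor `r` on `ℝ⁴` has `sec ≥ 0` if and only if
there exists `τ ∈ ℝ` such that `Q(ω) + τ · P(ω) ≥ 0` for every antisymmetric `ω`,
where `Q` is the quadratic form of the curvature operator and `P` is the Pfaffian. -/
theorem finsler_thorpe_trick_nonneg
    (r : Fin 4 → Fin 4 → Fin 4 → Fin 4 → ℝ)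
    (hr1 : ∀ i j k l, r i j k l = -r j i k l)
    (hr2 : ∀ i j k l, r i j k l = -r i j l k)
    (hr3 : ∀ i j k l, r i j k l = r k l i j)
    (hrb : ∀ i j k l, r i j k l + r j k i l + r k i j l = 0) :
    (∀ x y : Fin 4 → ℝ,
        0 ≤ ∑ i, ∑ j, ∑ k, ∑ l, r i j k l * x i * y j * y k * x l) ↔
      ∃ τ : ℝ, ∀ ω : Fin 4 → Fin 4 → ℝ, (∀ i j, ω i j = -ω j i) →
        0 ≤ (1 / 4) * (∑ i, ∑ j, ∑ k, ∑ l, r i j k l * ω i j * ω l k) +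
              τ * (ω 0 1 * ω 2 3 - ω 0 2 * ω 1 3 + ω 0 3 * ω 1 2) :=
  finsler_thorpe_trick_nonneg_general r hr1 hr2
end

section
/- (Lemma 3.3 of the paper, inequality part.) Let W and V be finite-dimensional real inner product spaces with dim W = dim V = n ≥ 2, and let l : W → V be a linear map that is area-nonincreasing: ‖l(w_1)‖²‖l(w_2)‖² − ⟨l(w_1), l(w_2)⟩² ≤ ‖w_1‖²‖w_2‖² − ⟨w_1, w_2⟩² for all w_1, w_2 ∈ W. Let R : V × V × V × V → ℝ be an algebraic curvature tensor (multilinear, with R(x,y,z,w) = −R(y,x,z,w) = −R(x,y,w,z), R(x,y,z,w) = R(z,w,x,y), and R(x,y,z,w) + R(y,z,x,w) + R(z,x,y,w) = 0) such that R(x,y,y,x) ≥ 0 for all x, y ∈ V. Then for every orthonormal basis {w_1, …, w_n} of W and every orthonormal basis {v_1, …, v_n} of V: Σ_{i<j} R(l(w_i), l(w_j), l(w_j), l(w_i)) ≤ Σ_{i<j} R(v_i, v_j, v_j, v_i). -/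
/-!
Diagonalise `l† ∘ l` by an orthonormal basis `e` of `W`: the images `l eᵢ` are pairwise
orthogonal, so `l eᵢ = ‖l eᵢ‖ • fᵢ` for an orthonormal basis `f` of `V`. For `i ≠ j`
area-nonincreasing gives `‖l eᵢ‖² ‖l eⱼ‖² ≤ 1`, hence, as `R(fᵢ, fⱼ, fⱼ, fᵢ) ≥ 0`, each term for
`e` is at most the corresponding term for `f`. Both sides of the inequality are half of a
double trace, which does not depend on the orthonormal basis, so `e` may replace `w` and `f`
may replace `v`.
-/

open Finset Module
open scoped RealInnerProductSpace

theorem sum_sum_eq_two_nsmul_sum_sum_Ioi {ι M : Type*} [Fintype ι] [LinearOrder ι]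
    [LocallyFiniteOrderTop ι] [LocallyFiniteOrderBot ι] [AddCommMonoid M] {g : ι → ι → M}
    (hg : ∀ i j, g i j = g j i) (hd : ∀ i, g i i = 0) :
    ∑ i, ∑ j, g i j = 2 • ∑ i, ∑ j ∈ Ioi i, g i j := by
  calc ∑ i, ∑ j, g i j = ∑ i, ∑ j ∈ {i}ᶜ, g j i := by
        rw [sum_comm]
        refine sum_congr rfl fun i _ => ?_
        rw [← sum_compl_add_sum {i}, sum_singleton, hd, add_zero]
    _ = ∑ i, ∑ j ∈ Ioi i, (g j i + g i j) := (sum_sum_Ioi_add_eq_sum_sum_off_diag g).symm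
    _ = 2 • ∑ i, ∑ j ∈ Ioi i, g i j := by
        simp only [smul_sum, two_nsmul, hg]

theorem LinearMap.apply_smul_le_of_sq_mul_sq_le_one {M : Type*} [AddCommGroup M] [Module ℝ M]
    (R : M →ₗ[ℝ] M →ₗ[ℝ] M →ₗ[ℝ] M →ₗ[ℝ] ℝ) {x y : M} (hxy : 0 ≤ R x y y x) {a b : ℝ}
    (hab : a ^ 2 * b ^ 2 ≤ 1) :
    R (a • x) (b • y) (b • y) (a • x) ≤ R x y y x := by
  simp only [map_smul, LinearMap.smul_apply, smul_eq_mul]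
  nlinarith

section InnerProductSpace

variable {W V : Type*} [NormedAddCommGroup W] [InnerProductSpace ℝ W]
  [NormedAddCommGroup V] [InnerProductSpace ℝ V]

namespace OrthonormalBasis

variable {ι κ : Type*} [Fintype ι] [Fintype κ]

theorem sum_apply_self_eq (B : W →ₗ[ℝ] W →ₗ[ℝ] ℝ) (e : OrthonormalBasis ι ℝ W)
    (f : OrthonormalBasis κ ℝ W) : ∑ i, B (e i) (e i) = ∑ k, B (f k) (f k) := by
  calc ∑ i, B (e i) (e i) = ∑ i, ∑ k, ⟪e i, f k⟫ * B (e i) (f k) := by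
        refine sum_congr rfl fun i _ => ?_
        simpa [real_inner_comm] using congrArg (B (e i)) (f.sum_repr' (e i)).symm
    _ = ∑ k, B (f k) (f k) := by
        rw [sum_comm]
        refine sum_congr rfl fun k _ => ?_
        simpa using congrArg (fun x => B x (f k)) (e.sum_repr' (f k))

theorem sum_sum_curvature_eq (R : V →ₗ[ℝ] V →ₗ[ℝ] V →ₗ[ℝ] V →ₗ[ℝ] ℝ) (l : W →ₗ[ℝ] V)
    (e : OrthonormalBasis ι ℝ W) (f : OrthonormalBasis κ ℝ W) :
    ∑ i, ∑ j, R (l (e i)) (l (e j)) (l (e j)) (l (e i)) =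
      ∑ i, ∑ j, R (l (f i)) (l (f j)) (l (f j)) (l (f i)) := by
  calc ∑ i, ∑ j, R (l (e i)) (l (e j)) (l (e j)) (l (e i))
      = ∑ i, ∑ j, R (l (e i)) (l (f j)) (l (f j)) (l (e i)) := sum_congr rfl fun i _ => by
        simpa using sum_apply_self_eq
          (((R (l (e i))).compl₁₂ l l).compr₂ (LinearMap.applyₗ (l (e i)))) e f
    _ = ∑ j, ∑ i, R (l (e i)) (l (f j)) (l (f j)) (l (e i)) := sum_comm
    _ = ∑ j, ∑ i, R (l (f i)) (l (f j)) (l (f j)) (l (f i)) := sum_congr rfl fun j _ => by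
        simpa using sum_apply_self_eq (((R.flip (l (f j))).flip (l (f j))).compl₁₂ l l) e f
    _ = ∑ i, ∑ j, R (l (f i)) (l (f j)) (l (f j)) (l (f i)) := sum_comm

theorem sum_sum_Ioi_curvature_eq [LinearOrder ι] [LocallyFiniteOrderTop ι]
    [LocallyFiniteOrderBot ι] {R : V →ₗ[ℝ] V →ₗ[ℝ] V →ₗ[ℝ] V →ₗ[ℝ] ℝ}
    (hR1 : ∀ x y z w : V, R x y z w = -R y x z w) (hR3 : ∀ x y z w : V, R x y z w = R z w x y)
    (l : W →ₗ[ℝ] V) (e f : OrthonormalBasis ι ℝ W) :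
    ∑ i, ∑ j ∈ Ioi i, R (l (e i)) (l (e j)) (l (e j)) (l (e i)) =
      ∑ i, ∑ j ∈ Ioi i, R (l (f i)) (l (f j)) (l (f j)) (l (f i)) := by
  have hdiag (x : V) : R x x x x = 0 := by linarith [hR1 x x x x]
  have htwice (b : OrthonormalBasis ι ℝ W) := sum_sum_eq_two_nsmul_sum_sum_Ioi
    (g := fun i j => R (l (b i)) (l (b j)) (l (b j)) (l (b i))) (fun i j => hR3 _ _ _ _)
    (fun i => hdiag _)
  have := sum_sum_curvature_eq R l e f
  rw [htwice e, htwice f, two_nsmul, two_nsmul] at this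
  linarith

end OrthonormalBasis

theorem exists_orthonormalBasis_eq_norm_smul_of_pairwise_inner_eq_zero {ι : Type*} [Fintype ι]
    [FiniteDimensional ℝ V] (hV : finrank ℝ V = Fintype.card ι) {u : ι → V}
    (hu : Pairwise fun i j => ⟪u i, u j⟫ = 0) :
    ∃ f : OrthonormalBasis ι ℝ V, ∀ i, u i = ‖u i‖ • f i := by
  let s : Set ι := {i | u i ≠ 0}
  have hs : Orthonormal ℝ (s.domRestrict fun i => ‖u i‖⁻¹ • u i) := by
    refine ⟨fun i => norm_smul_inv_norm i.2, fun i j hij => ?_⟩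
    simp [real_inner_smul_left, real_inner_smul_right, hu (Subtype.coe_ne_coe.mpr hij)]
  obtain ⟨f, hf⟩ := hs.exists_orthonormalBasis_extension_of_card_eq hV
  refine ⟨f, fun i => ?_⟩
  by_cases hi : u i = 0
  · simp [hi]
  · rw [hf i hi, smul_inv_smul₀ (norm_ne_zero_iff.mpr hi)]

theorem LinearMap.exists_orthonormalBasis_apply_eq_norm_smul [FiniteDimensional ℝ W]
    [FiniteDimensional ℝ V] {n : ℕ} (hW : finrank ℝ W = n) (hV : finrank ℝ V = n)
    (l : W →ₗ[ℝ] V) :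
    ∃ (e : OrthonormalBasis (Fin n) ℝ W) (f : OrthonormalBasis (Fin n) ℝ V),
      ∀ i, l (e i) = ‖l (e i)‖ • f i := by
  have hT := l.isSymmetric_adjoint_comp_self
  let e := hT.eigenvectorBasis hW
  have horth : Pairwise fun i j => ⟪l (e i), l (e j)⟫ = 0 := fun i j hij => by
    dsimp only
    rw [← LinearMap.adjoint_inner_right, ← LinearMap.comp_apply, hT.apply_eigenvectorBasis,
      real_inner_smul_right, e.orthonormal.2 hij, mul_zero]
  obtain ⟨f, hf⟩ := exists_orthonormalBasis_eq_norm_smul_of_pairwise_inner_eq_zero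
    (by simpa using hV) horth
  exact ⟨e, f, hf⟩

theorem curvature_apply_le_of_area_le {ι : Type*} [Fintype ι] {l : W →ₗ[ℝ] V}
    (hl : ∀ w₁ w₂ : W,
      ‖l w₁‖ ^ 2 * ‖l w₂‖ ^ 2 - ⟪l w₁, l w₂⟫ ^ 2 ≤ ‖w₁‖ ^ 2 * ‖w₂‖ ^ 2 - ⟪w₁, w₂⟫ ^ 2)
    {R : V →ₗ[ℝ] V →ₗ[ℝ] V →ₗ[ℝ] V →ₗ[ℝ] ℝ} (hsec : ∀ x y : V, 0 ≤ R x y y x)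
    {e : OrthonormalBasis ι ℝ W} {f : OrthonormalBasis ι ℝ V}
    (hef : ∀ i, l (e i) = ‖l (e i)‖ • f i) {i j : ι} (hij : i ≠ j) :
    R (l (e i)) (l (e j)) (l (e j)) (l (e i)) ≤ R (f i) (f j) (f j) (f i) := by
  have hinner : ⟪l (e i), l (e j)⟫ = 0 := by
    rw [hef i, hef j, real_inner_smul_left, real_inner_smul_right, f.orthonormal.2 hij]
    simp
  have harea : ‖l (e i)‖ ^ 2 * ‖l (e j)‖ ^ 2 ≤ 1 := by
    simpa [hinner, e.orthonormal.2 hij] using hl (e i) (e j)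
  rw [hef i, hef j]
  exact R.apply_smul_le_of_sq_mul_sq_le_one (hsec _ _) harea

end InnerProductSpace

theorem trace_inequality_general
    {W V : Type*} [NormedAddCommGroup W] [InnerProductSpace ℝ W]
    [NormedAddCommGroup V] [InnerProductSpace ℝ V]
    [FiniteDimensional ℝ W] [FiniteDimensional ℝ V]
    {n : ℕ}
    (hW : Module.finrank ℝ W = n) (hV : Module.finrank ℝ V = n)
    (l : W →ₗ[ℝ] V)
    (hl : ∀ w₁ w₂ : W,
      ‖l w₁‖ ^ 2 * ‖l w₂‖ ^ 2 - ⟪l w₁, l w₂⟫ ^ 2 ≤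
        ‖w₁‖ ^ 2 * ‖w₂‖ ^ 2 - ⟪w₁, w₂⟫ ^ 2)
    (R : V →ₗ[ℝ] V →ₗ[ℝ] V →ₗ[ℝ] V →ₗ[ℝ] ℝ)
    (hR1 : ∀ x y z w : V, R x y z w = -R y x z w)
    (hR3 : ∀ x y z w : V, R x y z w = R z w x y)
    (hsec : ∀ x y : V, 0 ≤ R x y y x)
    (w : OrthonormalBasis (Fin n) ℝ W) (v : OrthonormalBasis (Fin n) ℝ V) :
    ∑ i, ∑ j ∈ Ioi i, R (l (w i)) (l (w j)) (l (w j)) (l (w i)) ≤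
      ∑ i, ∑ j ∈ Ioi i, R (v i) (v j) (v j) (v i) := by
  obtain ⟨e, f, hef⟩ := l.exists_orthonormalBasis_apply_eq_norm_smul hW hV
  calc ∑ i, ∑ j ∈ Ioi i, R (l (w i)) (l (w j)) (l (w j)) (l (w i))
      = ∑ i, ∑ j ∈ Ioi i, R (l (e i)) (l (e j)) (l (e j)) (l (e i)) :=
        OrthonormalBasis.sum_sum_Ioi_curvature_eq hR1 hR3 l w e
    _ ≤ ∑ i, ∑ j ∈ Ioi i, R (f i) (f j) (f j) (f i) :=
        sum_le_sum fun i _ => sum_le_sum fun j hj =>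
          curvature_apply_le_of_area_le hl hsec hef (mem_Ioi.mp hj).ne
    _ = ∑ i, ∑ j ∈ Ioi i, R (v i) (v j) (v j) (v i) := by
        simpa using OrthonormalBasis.sum_sum_Ioi_curvature_eq hR1 hR3 LinearMap.id f v

/-- **Lemma 3.3 of the paper, inequality part.**
If `l : W → V` is an area-nonincreasing linear map between `n`-dimensional real inner
product spaces (`n ≥ 2`) and `R` is an algebraic curvature tensor on `V` with
`sec ≥ 0`, then for every orthonormal basis `{w_i}` of `W` and `{v_i}` of `V`,
`∑_{i<j} R(l w_i, l w_j, l w_j, l w_i) ≤ ∑_{i<j} R(v_i, v_j, v_j, v_i)`,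
i.e. `tr(L* ∘ R ∘ L) ≤ scal/2`. -/
theorem trace_inequality
    {W V : Type*} [NormedAddCommGroup W] [InnerProductSpace ℝ W]
    [NormedAddCommGroup V] [InnerProductSpace ℝ V]
    [FiniteDimensional ℝ W] [FiniteDimensional ℝ V]
    {n : ℕ} (hn : 2 ≤ n)
    (hW : Module.finrank ℝ W = n) (hV : Module.finrank ℝ V = n)
    (l : W →ₗ[ℝ] V)
    (hl : ∀ w₁ w₂ : W,
      ‖l w₁‖ ^ 2 * ‖l w₂‖ ^ 2 - ⟪l w₁, l w₂⟫ ^ 2 ≤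
        ‖w₁‖ ^ 2 * ‖w₂‖ ^ 2 - ⟪w₁, w₂⟫ ^ 2)
    (R : V →ₗ[ℝ] V →ₗ[ℝ] V →ₗ[ℝ] V →ₗ[ℝ] ℝ)
    (hR1 : ∀ x y z w : V, R x y z w = -R y x z w)
    (hR2 : ∀ x y z w : V, R x y z w = -R x y w z)
    (hR3 : ∀ x y z w : V, R x y z w = R z w x y)
    (hRb : ∀ x y z w : V, R x y z w + R y z x w + R z x y w = 0)
    (hsec : ∀ x y : V, 0 ≤ R x y y x)
    (w : OrthonormalBasis (Fin n) ℝ W) (v : OrthonormalBasis (Fin n) ℝ V) :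
    ∑ i, ∑ j ∈ Ioi i, R (l (w i)) (l (w j)) (l (w j)) (l (w i)) ≤
      ∑ i, ∑ j ∈ Ioi i, R (v i) (v j) (v j) (v i) :=
  trace_inequality_general hW hV l hl R hR1 hR3 hsec w v
end

section
/- (Combinatorial core of the rigidity argument in Lemma 3.3.) Let n ≥ 1, let s : Fin n → Fin n → ℝ satisfy s i j = s j i ≥ 0 for all i, j and s i i = 0 for all i, and let λ : Fin n → ℝ satisfy λ i ≥ 0 for all i and λ i · λ j ≤ 1 for all i ≠ j. Assume: (1) Σ_{i<j} (λ i)²·(λ j)²·s i j = Σ_{i<j} s i j; (2) for every a ∈ Fin n there exist i < j with i ≠ a, j ≠ a and s i j > 0; (3) for every a ∈ Fin n there exists b ≠ a with s a b > 0. Then λ i = 1 for every i ∈ Fin n. -/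
open Finset

/-- **Combinatorial core of the rigidity argument in Lemma 3.3 of the paper.**
If `s i j ≥ 0` is symmetric with zero diagonal, `λ i ≥ 0` with `λ i * λ j ≤ 1` for
`i ≠ j`, the weighted sum `∑_{i<j} λ i² λ j² s i j` equals `∑_{i<j} s i j`, every index
`a` avoids some pair `i < j` with `s i j > 0`, and every index `a` has some `b ≠ a`
with `s a b > 0`, then all `λ i = 1`. -/
theorem rigidity_combinatorial_core
    {n : ℕ} (hn : 1 ≤ n)
    (s : Fin n → Fin n → ℝ) (lam : Fin n → ℝ)
    (hsymm : ∀ i j, s i j = s j i)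
    (hs0 : ∀ i j, 0 ≤ s i j)
    (hdiag : ∀ i, s i i = 0)
    (hlam0 : ∀ i, 0 ≤ lam i)
    (hlam1 : ∀ i j, i ≠ j → lam i * lam j ≤ 1)
    (heq : ∑ i, ∑ j ∈ Ioi i, (lam i) ^ 2 * (lam j) ^ 2 * s i j =
      ∑ i, ∑ j ∈ Ioi i, s i j)
    (hscal : ∀ a : Fin n, ∃ i j : Fin n, i < j ∧ i ≠ a ∧ j ≠ a ∧ 0 < s i j)
    (hric : ∀ a : Fin n, ∃ b : Fin n, b ≠ a ∧ 0 < s a b) :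
    ∀ i, lam i = 1 := by
  have hterm : ∀ i ∈ (univ : Finset (Fin n)),
      ∑ j ∈ Ioi i, (lam i) ^ 2 * (lam j) ^ 2 * s i j ≤ ∑ j ∈ Ioi i, s i j := by
    intro i _
    refine Finset.sum_le_sum fun j hj => ?_
    have hij : i ≠ j := ne_of_lt (mem_Ioi.mp hj)
    have h1 := hlam1 i j hij
    have hp : 0 ≤ lam i * lam j := mul_nonneg (hlam0 i) (hlam0 j)
    have h2 : (lam i * lam j) ^ 2 ≤ 1 := by nlinarith
    calc (lam i) ^ 2 * (lam j) ^ 2 * s i j = (lam i * lam j) ^ 2 * s i j := by ring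
      _ ≤ 1 * s i j := mul_le_mul_of_nonneg_right h2 (hs0 i j)
      _ = s i j := one_mul _
  have houter := (Finset.sum_eq_sum_iff_of_le hterm).mp heq
  have key : ∀ i j : Fin n, i < j → 0 < s i j → lam i * lam j = 1 := by
    intro i j hij hs
    have hinner := houter i (mem_univ i)
    have hterm2 : ∀ k ∈ Ioi i, (lam i) ^ 2 * (lam k) ^ 2 * s i k ≤ s i k := by
      intro k hk
      have hik : i ≠ k := ne_of_lt (mem_Ioi.mp hk)
      have h1 := hlam1 i k hik
      have hp : 0 ≤ lam i * lam k := mul_nonneg (hlam0 i) (hlam0 k)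
      have h2 : (lam i * lam k) ^ 2 ≤ 1 := by nlinarith
      calc (lam i) ^ 2 * (lam k) ^ 2 * s i k = (lam i * lam k) ^ 2 * s i k := by ring
        _ ≤ 1 * s i k := mul_le_mul_of_nonneg_right h2 (hs0 i k)
        _ = s i k := one_mul _
    have hterm3 := (Finset.sum_eq_sum_iff_of_le hterm2).mp hinner j (mem_Ioi.mpr hij)
    have h0 : ((lam i * lam j) ^ 2 - 1) * s i j = 0 := by linear_combination hterm3
    have hp : 0 ≤ lam i * lam j := mul_nonneg (hlam0 i) (hlam0 j)
    rcases mul_eq_zero.mp h0 with h | h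
    · have h4 : (lam i * lam j - 1) * (lam i * lam j + 1) = 0 := by linear_combination h
      rcases mul_eq_zero.mp h4 with h5 | h5
      · linarith
      · linarith
    · exact absurd h (ne_of_gt hs)
  have hle : ∀ a, lam a ≤ 1 := by
    intro a
    obtain ⟨i, j, hij, hia, hja, hs⟩ := hscal a
    have h1 := key i j hij hs
    have h2 := hlam1 a i (Ne.symm hia)
    have h3 := hlam1 a j (Ne.symm hja)
    nlinarith [hlam0 a, hlam0 i, hlam0 j, mul_nonneg (hlam0 a) (hlam0 i)]
  intro a
  obtain ⟨b, hba, hs⟩ := hric a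
  have hab : lam a * lam b = 1 := by
    rcases lt_or_gt_of_ne (Ne.symm hba) with h | h
    · exact key a b h hs
    · have := key b a h (by rw [hsymm]; exact hs)
      linarith [this, mul_comm (lam a) (lam b)]
  have := hle a
  have := hle b
  nlinarith [hlam0 a, hlam0 b]
end
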